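/- Let q ≥ 1 be an integer and let β be a real number such that β + h/q is not a nonpositive integer for any h ∈ {0, 1, …, q−1}. Then for every real x, −∑_{k=0}^∞ k · ψ(k/q + β) x^k / Γ(k/q + β) = −∑_{h=0}^{q−1} (x^h / Γ(h/q + β)) · [ h·(ψ(h/q + β) + Q(h/q + β, x^q)) + q · x^q · P(h/q + β, x^q) ], where Q(a, y) = ∑_{k=1}^∞ y^k ψ(k + a)/(a)_k and P(a, y) = ∑_{k=1}^∞ k · y^{k−1} ψ(k + a)/(a)_k. (This is Theorem 5.3: the reduction formula for the derivative of the two-parameter Mittag-Leffler function with respect to α at α = 1/q, with P(a,y) = ∂Q(a,y)/∂y.) -/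

import Mathlib

open scoped BigOperators

/-- The digamma function `ψ(x) = Γ'(x)/Γ(x)`. -/
noncomputable def digamma (x : ℝ) : ℝ := deriv Real.Gamma x / Real.Gamma x

/-- `Q(a, y) = ∑_{k=1}^∞ y^k ψ(k + a) / (a)_k`, with `(a)_k` the Pochhammer symbol. -/
noncomputable def Q (a y : ℝ) : ℝ :=
  ∑' k : ℕ, y ^ (k + 1) * digamma (((k : ℝ) + 1) + a) / (ascPochhammer ℝ (k + 1)).eval a

/-- `P(a, y) = ∑_{k=1}^∞ k y^{k−1} ψ(k + a)/(a)_k = ∂Q(a,y)/∂y`. -/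
noncomputable def P (a y : ℝ) : ℝ :=
  ∑' k : ℕ,
    ((k : ℝ) + 1) * y ^ k * digamma (((k : ℝ) + 1) + a) / (ascPochhammer ℝ (k + 1)).eval a

/-!
Split the series into the residue classes `k = m q + h`, `0 ≤ h < q`. With `a = h/q + β` and
`y = x^q`, the relation `Γ(m + a) = Γ(a) (a)_m` turns the class-`h` subseries into
`x^h/Γ(a) · ∑_m (h + q m) ψ(m + a) y^m/(a)_m`; splitting off the `m = 0` term, the two parts of
this sum are `ψ(a) + Q(a, y)` and `y P(a, y)`. All series converge absolutely because `ψ(m + a)`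
grows at most linearly while `(a)_m` grows factorially.
-/

open Filter Asymptotics Finset

theorem hasSum_of_hasSum_residues {M : Type*} [AddCommMonoid M] [TopologicalSpace M]
    [ContinuousAdd M] {q : ℕ} (hq : 0 < q) {f g : ℕ → M}
    (hf : ∀ h < q, HasSum (fun m => f (m * q + h)) (g h)) :
    HasSum f (∑ h ∈ range q, g h) := by
  have hsplit : f = fun n => ∑ h ∈ range q, if n % q = h then f n else 0 := by
    funext n
    simp [Nat.mod_lt n hq]
  rw [hsplit]
  refine hasSum_sum fun h hh => ?_
  have hh : h < q := mem_range.mp hh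
  have hinj : Function.Injective fun m => m * q + h := fun m m' e => by
    simpa [hq.ne'] using e
  refine (hinj.hasSum_iff ?_).mp ?_
  · rintro n hn
    rw [if_neg]
    rintro rfl
    exact hn ⟨n / q, Nat.div_add_mod' n q⟩
  · simpa [Function.comp_def, Nat.mul_add_mod_of_lt hh] using hf h hh

theorem ascPochhammer_eval_ne_zero {a : ℝ} (ha : ∀ n : ℕ, a ≠ -n) (m : ℕ) :
    (ascPochhammer ℝ m).eval a ≠ 0 := by
  rw [Ne, ascPochhammer_eval_eq_zero_iff]
  rintro ⟨k, -, hk⟩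
  exact ha k (by linarith)

theorem Gamma_natCast_add {a : ℝ} (ha : ∀ n : ℕ, a ≠ -n) (m : ℕ) :
    Real.Gamma (m + a) = Real.Gamma a * (ascPochhammer ℝ m).eval a := by
  induction m with
  | zero => simp
  | succ m ih =>
    have hm : (m : ℝ) + a ≠ 0 := fun h => ha m (by linarith)
    rw [Nat.cast_succ, add_right_comm, Real.Gamma_add_one hm, ih, ascPochhammer_succ_eval]
    ring

theorem abs_digamma_le {t : ℝ} (ht : 2 ≤ t) : |digamma t| ≤ t := by
  have ht0 : 0 < t := by linarith
  have hΓ : 0 < Real.Gamma t := Real.Gamma_pos_of_pos ht0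
  have hd : DifferentiableAt ℝ Real.Gamma t :=
    Real.differentiableAt_Gamma fun m => by linarith [(m.cast_nonneg : (0 : ℝ) ≤ m)]
  have hnext : Real.Gamma (t + 1) = t * Real.Gamma t := Real.Gamma_add_one ht0.ne'
  have hprev : Real.Gamma t = (t - 1) * Real.Gamma (t - 1) := by
    simpa using Real.Gamma_add_one (s := t - 1) (by linarith)
  have hprev_pos : 0 < Real.Gamma (t - 1) := Real.Gamma_pos_of_pos (by linarith)
  -- convexity of Γ squeezes Γ'(t) between the slopes over [t - 1, t] and [t, t + 1]
  have hup : deriv Real.Gamma t ≤ Real.Gamma (t + 1) - Real.Gamma t := by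
    simpa [slope_def_field] using Real.convexOn_Gamma.deriv_le_slope (Set.mem_Ioi.mpr ht0)
      (Set.mem_Ioi.mpr (by linarith : (0 : ℝ) < t + 1)) (by linarith) hd
  have hlo : Real.Gamma t - Real.Gamma (t - 1) ≤ deriv Real.Gamma t := by
    simpa [slope_def_field] using Real.convexOn_Gamma.slope_le_deriv
      (Set.mem_Ioi.mpr (by linarith : (0 : ℝ) < t - 1)) (Set.mem_Ioi.mpr ht0) (by linarith) hd
  rw [digamma, abs_div, abs_of_pos hΓ, div_le_iff₀ hΓ, abs_le]
  constructor <;> nlinarith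

theorem summable_pow_div_ascPochhammer {a : ℝ} (ha : ∀ n : ℕ, a ≠ -n) (r : ℝ) :
    Summable fun k : ℕ => r ^ k / (ascPochhammer ℝ k).eval a := by
  refine summable_of_ratio_norm_eventually_le (r := 1 / 2) (by norm_num) ?_
  filter_upwards [eventually_ge_atTop ⌈2 * |r| + |a|⌉₊] with k hk
  have hk : 2 * |r| + |a| ≤ k := Nat.ceil_le.mp hk
  have hak : 2 * |r| ≤ a + k := by linarith [neg_abs_le a]
  have hak0 : 0 < a + k := by
    refine lt_of_le_of_ne (by linarith [abs_nonneg r]) fun h => ha k (by linarith)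
  have hstep : r ^ (k + 1) / (ascPochhammer ℝ (k + 1)).eval a
      = r ^ k / (ascPochhammer ℝ k).eval a * (r / (a + k)) := by
    rw [ascPochhammer_succ_eval, pow_succ, mul_div_mul_comm]
  have hratio : ‖r / (a + k)‖ ≤ 1 / 2 := by
    rw [norm_div, Real.norm_eq_abs, Real.norm_eq_abs, abs_of_pos hak0, div_le_iff₀ hak0]
    linarith
  rw [hstep, norm_mul, mul_comm]
  exact mul_le_mul_of_nonneg_right hratio (norm_nonneg _)

theorem summable_div_ascPochhammer_of_isBigO {a : ℝ} (ha : ∀ n : ℕ, a ≠ -n) {u : ℕ → ℝ}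
    {r : ℝ} (hu : u =O[atTop] fun k => r ^ k) :
    Summable fun k : ℕ => u k / (ascPochhammer ℝ k).eval a := by
  refine summable_of_isBigO_nat (summable_pow_div_ascPochhammer ha r) ?_
  simpa only [div_eq_mul_inv] using
    hu.mul (isBigO_refl (fun k => ((ascPochhammer ℝ k).eval a)⁻¹) _)

theorem isBigO_natCast_two_pow : (fun k : ℕ => (k : ℝ)) =O[atTop] fun k => (2 : ℝ) ^ k := by
  simpa using (isLittleO_pow_const_const_pow_of_one_lt (R := ℝ) 1 one_lt_two).isBigO

theorem isBigO_digamma_natCast_add (c : ℝ) :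
    (fun k : ℕ => digamma (k + c)) =O[atTop] fun k => (2 : ℝ) ^ k := by
  have hlin : (fun k : ℕ => digamma (k + c)) =O[atTop] fun k => (k : ℝ) := by
    refine IsBigO.of_bound 2 ?_
    filter_upwards [eventually_ge_atTop ⌈2 + |c|⌉₊] with k hk
    have hk : 2 + |c| ≤ k := Nat.ceil_le.mp hk
    rw [Real.norm_eq_abs, Real.norm_eq_abs, Nat.abs_cast]
    linarith [abs_digamma_le (t := k + c) (by linarith [neg_abs_le c]), le_abs_self c]
  exact hlin.trans isBigO_natCast_two_pow

theorem hasSum_digamma_add_Q {a : ℝ} (ha : ∀ n : ℕ, a ≠ -n) (y : ℝ) :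
    HasSum (fun m : ℕ => digamma (m + a) * y ^ m / (ascPochhammer ℝ m).eval a)
      (digamma a + Q a y) := by
  have hs : Summable fun m : ℕ => digamma (m + a) * y ^ m / (ascPochhammer ℝ m).eval a := by
    refine summable_div_ascPochhammer_of_isBigO ha (r := 2 * y) ?_
    simpa [mul_pow] using (isBigO_digamma_natCast_add a).mul (isBigO_refl (fun k => y ^ k) _)
  suffices h : ∑' m : ℕ, digamma (m + a) * y ^ m / (ascPochhammer ℝ m).eval a
      = digamma a + Q a y from h ▸ hs.hasSum
  rw [hs.tsum_eq_zero_add, Q]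
  simp [mul_comm]

theorem hasSum_mul_P {a : ℝ} (ha : ∀ n : ℕ, a ≠ -n) (y : ℝ) :
    HasSum (fun m : ℕ => m * digamma (m + a) * y ^ m / (ascPochhammer ℝ m).eval a)
      (y * P a y) := by
  have hs : Summable fun m : ℕ => m * digamma (m + a) * y ^ m / (ascPochhammer ℝ m).eval a := by
    refine summable_div_ascPochhammer_of_isBigO ha (r := 4 * y) ?_
    refine ((isBigO_natCast_two_pow.mul (isBigO_digamma_natCast_add a)).mul
      (isBigO_refl (fun m => y ^ m) _)).trans (isBigO_of_le _ fun m => le_of_eq ?_)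
    rw [← mul_pow, ← mul_pow]
    norm_num
  suffices h : ∑' m : ℕ, m * digamma (m + a) * y ^ m / (ascPochhammer ℝ m).eval a = y * P a y
    from h ▸ hs.hasSum
  rw [hs.tsum_eq_zero_add, P, ← tsum_mul_left]
  simp only [Nat.cast_zero, zero_mul, zero_div, zero_add, Nat.cast_succ, pow_succ]
  exact tsum_congr fun k => by ring

theorem hasSum_affine_mul_digamma_div_ascPochhammer {a : ℝ} (ha : ∀ n : ℕ, a ≠ -n) (y c d : ℝ) :
    HasSum (fun m : ℕ => (c + d * m) * digamma (m + a) * y ^ m / (ascPochhammer ℝ m).eval a)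
      (c * (digamma a + Q a y) + d * y * P a y) := by
  rw [mul_assoc d]
  exact (((hasSum_digamma_add_Q ha y).mul_left c).add
    ((hasSum_mul_P ha y).mul_left d)).congr_fun fun m => by ring

/-- **Theorem 5.3**: for an integer `q ≥ 1` and real `β` with `β + h/q` never a nonpositive
integer for `h ∈ {0,…,q−1}`, for every real `x`,
`−∑_{k=0}^∞ k ψ(k/q + β) x^k/Γ(k/q + β)
  = −∑_{h=0}^{q−1} (x^h/Γ(h/q + β)) [h (ψ(h/q + β) + Q(h/q + β, x^q)) + q x^q P(h/q + β, x^q)]`. -/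
theorem mittagLeffler_alpha_deriv_inv_nat (q : ℕ) (hq : 1 ≤ q) (β : ℝ)
    (hβ : ∀ h : ℕ, h < q → ∀ n : ℕ, β + (h : ℝ) / q ≠ -(n : ℝ)) (x : ℝ) :
    -∑' k : ℕ, (k : ℝ) * digamma ((k : ℝ) / q + β) * x ^ k / Real.Gamma ((k : ℝ) / q + β) =
      -∑ h ∈ Finset.range q,
        x ^ h / Real.Gamma ((h : ℝ) / q + β) *
          ((h : ℝ) * (digamma ((h : ℝ) / q + β) + Q ((h : ℝ) / q + β) (x ^ q)) +
            (q : ℝ) * x ^ q * P ((h : ℝ) / q + β) (x ^ q)) := by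
  refine congrArg Neg.neg (HasSum.tsum_eq (hasSum_of_hasSum_residues hq fun h hh => ?_))
  have ha : ∀ n : ℕ, (h : ℝ) / q + β ≠ -n := fun n => by rw [add_comm]; exact hβ h hh n
  have harg : ∀ m : ℕ, ((m * q + h : ℕ) : ℝ) / q + β = m + ((h : ℝ) / q + β) := fun m => by
    push_cast
    field_simp
    ring
  refine ((hasSum_affine_mul_digamma_div_ascPochhammer ha (x ^ q) h q).mul_left
    (x ^ h / Real.Gamma ((h : ℝ) / q + β))).congr_fun fun m => ?_
  rw [harg, Gamma_natCast_add ha, pow_add, pow_mul']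
  push_cast
  ring
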